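/- Let x, y ∈ ℝ^n, and suppose iso(y)_i < iso(x)_1 is possible; then in all cases, for every i ∈ {1,...,n}, the positive part satisfies (iso(x)_1 − iso(y)_i)_+ ≤ ‖x − y‖_SW / √i, where ‖·‖_SW is the sliding window norm with ψ(m) = √m. Consequently, Σ_{i=1}^n (iso(x)_1 − iso(y)_i)_+² ≤ 2 ‖x − y‖_SW² log(2n). -/

import Mathlib

open MeasureTheory Filter ProbabilityTheory

noncomputable section

/-- The isotonic (monotone nondecreasing) cone in `ℝ^n` with the Euclidean norm. -/
def monoCone (n : ℕ) : Set (EuclideanSpace ℝ (Fin n)) :=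
  {v | ∀ i j : Fin n, i ≤ j → v i ≤ v j}

open Classical in
/-- Euclidean projection onto the monotone cone (chosen minimizer of the distance). -/
def isoProj {n : ℕ} (x : EuclideanSpace ℝ (Fin n)) : EuclideanSpace ℝ (Fin n) :=
  if h : ∃ z ∈ monoCone n, ∀ w ∈ monoCone n, dist x z ≤ dist x w then h.choose else x

/-- The map `A_i` replacing entries `i` and `i+1` (0-based) by their common average. -/
def avgMap {n : ℕ} (i : ℕ) (x : EuclideanSpace ℝ (Fin n)) : EuclideanSpace ℝ (Fin n) :=
  WithLp.toLp 2 fun j => if h : i + 1 < n then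
      (if (j : ℕ) = i ∨ (j : ℕ) = i + 1
        then (x ⟨i, by omega⟩ + x ⟨i + 1, h⟩) / 2 else x j)
    else x j

/-- One step of neighbor pooling: average entries `i`, `i+1` if they violate monotonicity. -/
def isoStep {n : ℕ} (i : ℕ) (x : EuclideanSpace ℝ (Fin n)) : EuclideanSpace ℝ (Fin n) :=
  if h : i + 1 < n then
    (if x ⟨i, by omega⟩ ≤ x ⟨i + 1, h⟩ then x else avgMap i x)
  else x

/-- Nonincreasing under neighbor averaging. -/
def NUNA {n : ℕ} (N : Seminorm ℝ (EuclideanSpace ℝ (Fin n))) : Prop :=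
  ∀ x : EuclideanSpace ℝ (Fin n), ∀ i : ℕ, i + 1 < n → N (avgMap i x) ≤ N x

/-- Average of the `m` entries of `x` starting at (0-based) index `a`. -/
def wavg {n : ℕ} (x : EuclideanSpace ℝ (Fin n)) (a m : ℕ) : ℝ :=
  (∑ t ∈ Finset.range m, if h : a + t < n then x ⟨a + t, h⟩ else 0) / m

/-- The sliding window seminorm with weight function `ψ`. -/
def swNorm {n : ℕ} (ψ : ℕ → ℝ) (x : EuclideanSpace ℝ (Fin n)) : ℝ :=
  sSup {r | ∃ a m : ℕ, 1 ≤ m ∧ a + m ≤ n ∧ r = |wavg x a m| * ψ m}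

/-! Let `b ≥ i` be the right end of the block of constancy of `iso y` containing `i`. Testing
the variational inequality `⟪x - iso x, w - iso x⟫ ≤ 0` against `w = iso x - 1_{[0,k]}` shows
that every prefix sum of `iso x` is at most that of `x`; testing it against
`w = iso y + t • 1_{[0,b]}` (small `t > 0`, admissible because `iso y` jumps after `b`) shows that
the prefix sum of `y` up to `b` is at most that of `iso y`. As `iso x` is monotone, `iso(x)_0` is
at most its mean over `[0,b]`, and `iso y` is at most `iso(y)_b = iso(y)_i` there, so
`iso(x)_0 - iso(y)_i` is at most the mean of `x - y` over `[0,b]`, i.e. at most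
`‖x - y‖_SW / √(b+1) ≤ ‖x - y‖_SW / √(i+1)`. Squaring and summing leaves the harmonic sum
`H_n ≤ 1 + log n ≤ 2 log (2n)`. -/

lemma Monotone.exists_maximal_ge_apply_eq {α β : Type*} [LinearOrder α] [Fintype α]
    [LinearOrder β] {f : α → β} (hf : Monotone f) (i : α) :
    ∃ b, i ≤ b ∧ f b = f i ∧ ∀ q, b < q → f b < f q := by
  classical
  set S := Finset.univ.filter fun j => f j ≤ f i
  have hiS : i ∈ S := by simp [S]
  have hbS : f (S.max' ⟨i, hiS⟩) ≤ f i := (Finset.mem_filter.1 (S.max'_mem _)).2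
  have hib : i ≤ S.max' ⟨i, hiS⟩ := S.le_max' i hiS
  refine ⟨_, hib, le_antisymm hbS (hf hib), fun q hq => ?_⟩
  by_contra! hfq
  exact not_lt_of_ge (S.le_max' q (by simp [S, hfq.trans hbS])) hq

section MonotoneCone

variable {n : ℕ}

lemma convex_monoCone (n : ℕ) : Convex ℝ (monoCone n) := by
  intro u hu v hv a b ha hb _ i j hij
  simp only [PiLp.add_apply, PiLp.smul_apply, smul_eq_mul]
  have := hu i j hij
  have := hv i j hij
  nlinarith

lemma isClosed_monoCone (n : ℕ) : IsClosed (monoCone n) := by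
  simp only [monoCone, Set.ofPred_forall]
  exact isClosed_iInter fun i => isClosed_iInter fun j => isClosed_iInter fun _ =>
    isClosed_le (EuclideanSpace.proj i).continuous (EuclideanSpace.proj j).continuous

lemma exists_dist_le_of_mem_monoCone (x : EuclideanSpace ℝ (Fin n)) :
    ∃ z ∈ monoCone n, ∀ w ∈ monoCone n, dist x z ≤ dist x w := by
  obtain ⟨z, hz, hmin⟩ := exists_norm_eq_iInf_of_complete_convex
    (⟨0, fun _ _ _ => le_rfl⟩ : (monoCone n).Nonempty)
    (isClosed_monoCone n).isComplete (convex_monoCone n) x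
  refine ⟨z, hz, fun w hw => ?_⟩
  rw [dist_eq_norm, dist_eq_norm, hmin]
  exact ciInf_le ⟨0, Set.forall_mem_range.2 fun _ => norm_nonneg _⟩ (⟨w, hw⟩ : monoCone n)

lemma isoProj_mem (x : EuclideanSpace ℝ (Fin n)) : isoProj x ∈ monoCone n := by
  rw [isoProj, dif_pos (exists_dist_le_of_mem_monoCone x)]
  exact (exists_dist_le_of_mem_monoCone x).choose_spec.1

lemma dist_isoProj_le (x : EuclideanSpace ℝ (Fin n)) {w : EuclideanSpace ℝ (Fin n)}
    (hw : w ∈ monoCone n) : dist x (isoProj x) ≤ dist x w := by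
  rw [isoProj, dif_pos (exists_dist_le_of_mem_monoCone x)]
  exact (exists_dist_le_of_mem_monoCone x).choose_spec.2 w hw

lemma inner_sub_isoProj_le_zero (x : EuclideanSpace ℝ (Fin n)) {w : EuclideanSpace ℝ (Fin n)}
    (hw : w ∈ monoCone n) : inner ℝ (x - isoProj x) (w - isoProj x) ≤ 0 := by
  have : Nonempty (monoCone n) := ⟨⟨_, isoProj_mem x⟩⟩
  have hbdd : BddBelow (Set.range fun w : monoCone n => ‖x - (w : EuclideanSpace ℝ (Fin n))‖) :=
    ⟨0, Set.forall_mem_range.2 fun _ => norm_nonneg _⟩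
  have hmin : ‖x - isoProj x‖ = ⨅ w : monoCone n, ‖x - (w : EuclideanSpace ℝ (Fin n))‖ := by
    refine le_antisymm (le_ciInf fun w => ?_) (ciInf_le hbdd ⟨_, isoProj_mem x⟩)
    rw [← dist_eq_norm, ← dist_eq_norm]
    exact dist_isoProj_le x w.2
  exact (norm_eq_iInf_iff_real_inner_le_zero (convex_monoCone n) (isoProj_mem x)).1 hmin w hw

def prefixInd (k : Fin n) : EuclideanSpace ℝ (Fin n) :=
  WithLp.toLp 2 fun j => if j ≤ k then 1 else 0

lemma inner_prefixInd (v : EuclideanSpace ℝ (Fin n)) (k : Fin n) :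
    inner ℝ v (prefixInd k) = ∑ j ∈ Finset.Iic k, v j := by
  rw [PiLp.inner_apply, ← Finset.filter_ge_eq_Iic, Finset.sum_filter]
  simp [prefixInd]

lemma add_smul_prefixInd_mem_monoCone {z : EuclideanSpace ℝ (Fin n)} (hz : z ∈ monoCone n)
    {k : Fin n} {t : ℝ} (hgap : ∀ q, k < q → z k + t ≤ z q) :
    z + t • prefixInd k ∈ monoCone n := by
  intro p q hpq
  have hzpq := hz p q hpq
  simp only [PiLp.add_apply, PiLp.smul_apply, smul_eq_mul, prefixInd]
  split_ifs with hp hq hq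
  · linarith
  · linarith [hz p k hp, hgap q (not_le.1 hq)]
  · exact absurd (hpq.trans hq) hp
  · linarith

lemma mul_sum_Iic_sub_isoProj_nonpos (x : EuclideanSpace ℝ (Fin n)) {k : Fin n} {t : ℝ}
    (hgap : ∀ q, k < q → isoProj x k + t ≤ isoProj x q) :
    t * ∑ j ∈ Finset.Iic k, (x j - isoProj x j) ≤ 0 := by
  have h := inner_sub_isoProj_le_zero x (add_smul_prefixInd_mem_monoCone (isoProj_mem x) hgap)
  rwa [add_sub_cancel_left, real_inner_smul_right, inner_prefixInd] at h

lemma sum_Iic_isoProj_le (x : EuclideanSpace ℝ (Fin n)) (k : Fin n) :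
    ∑ j ∈ Finset.Iic k, isoProj x j ≤ ∑ j ∈ Finset.Iic k, x j := by
  have h := mul_sum_Iic_sub_isoProj_nonpos x (t := -1) fun q hq =>
    by linarith [isoProj_mem x k q hq.le]
  rw [Finset.sum_sub_distrib] at h
  linarith

lemma sum_Iic_le_sum_Iic_isoProj (x : EuclideanSpace ℝ (Fin n)) {b : Fin n}
    (hb : ∀ q, b < q → isoProj x b < isoProj x q) :
    ∑ j ∈ Finset.Iic b, x j ≤ ∑ j ∈ Finset.Iic b, isoProj x j := by
  obtain ⟨t, ht, hgap⟩ : ∃ t > 0, ∀ q, b < q → isoProj x b + t ≤ isoProj x q := by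
    rcases (Finset.Ioi b).eq_empty_or_nonempty with h | h
    · exact ⟨1, one_pos, fun q hq => absurd (Finset.mem_Ioi.2 hq) (by simp [h])⟩
    · obtain ⟨q₀, hq₀, hmin⟩ := (Finset.Ioi b).exists_min_image (isoProj x) h
      refine ⟨isoProj x q₀ - isoProj x b, sub_pos.2 (hb q₀ (Finset.mem_Ioi.1 hq₀)), ?_⟩
      exact fun q hq => by linarith [hmin q (Finset.mem_Ioi.2 hq)]
  have h := nonpos_of_mul_nonpos_right (mul_sum_Iic_sub_isoProj_nonpos x hgap) ht
  rw [Finset.sum_sub_distrib] at h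
  linarith

end MonotoneCone

section SlidingWindow

variable {n : ℕ} (ψ : ℕ → ℝ)

lemma wavg_zero_succ (v : EuclideanSpace ℝ (Fin n)) (b : Fin n) :
    wavg v 0 (b + 1) = (∑ j ∈ Finset.Iic b, v j) / (b + 1) := by
  rw [wavg, Nat.cast_add_one, Nat.range_succ_eq_Iic, ← Fin.map_valEmbedding_Iic,
    Finset.sum_map]
  congr 1
  refine Finset.sum_congr rfl fun j _ => ?_
  simp

lemma le_swNorm (v : EuclideanSpace ℝ (Fin n)) {a m : ℕ} (hm : 1 ≤ m) (ham : a + m ≤ n) :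
    |wavg v a m| * ψ m ≤ swNorm ψ v := by
  refine le_csSup (Set.Finite.bddAbove ?_) ⟨a, m, hm, ham, rfl⟩
  refine (((Set.finite_Iic n).prod (Set.finite_Iic n)).image
    fun p : ℕ × ℕ => |wavg v p.1 p.2| * ψ p.2).subset ?_
  rintro r ⟨a, m, -, ham, rfl⟩
  exact ⟨(a, m), ⟨Set.mem_Iic.2 (by omega), Set.mem_Iic.2 (by omega)⟩, rfl⟩

lemma swNorm_nonneg (hψ : ∀ m, 0 ≤ ψ m) (v : EuclideanSpace ℝ (Fin n)) : 0 ≤ swNorm ψ v :=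
  Real.sSup_nonneg <| by
    rintro r ⟨a, m, -, -, rfl⟩
    exact mul_nonneg (abs_nonneg _) (hψ m)

end SlidingWindow

lemma wavg_le_swNorm_div_sqrt {n : ℕ} (v : EuclideanSpace ℝ (Fin n)) {a m : ℕ} (hm : 1 ≤ m)
    (ham : a + m ≤ n) : wavg v a m ≤ swNorm (fun m => Real.sqrt m) v / Real.sqrt m := by
  rw [le_div_iff₀ (Real.sqrt_pos.2 (by exact_mod_cast hm))]
  exact (mul_le_mul_of_nonneg_right (le_abs_self _) (Real.sqrt_nonneg _)).trans
    (le_swNorm (fun m => Real.sqrt m) v hm ham)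

lemma isoProj_zero_sub_isoProj_le {n : ℕ} (hn : 1 ≤ n) (x y : EuclideanSpace ℝ (Fin n))
    (i : Fin n) : isoProj x ⟨0, hn⟩ - isoProj y i
      ≤ swNorm (fun m => Real.sqrt m) (x - y) / Real.sqrt ((i : ℕ) + 1) := by
  obtain ⟨b, hib, hb_eq, hb_gap⟩ :=
    Monotone.exists_maximal_ge_apply_eq (fun p q h => isoProj_mem y p q h) i
  have hcard : ((Finset.Iic b).card : ℝ) = b + 1 := by simp
  have hx : ((b : ℕ) + 1) * isoProj x ⟨0, hn⟩ ≤ ∑ j ∈ Finset.Iic b, x j := by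
    refine le_trans ?_ (sum_Iic_isoProj_le x b)
    rw [← hcard, ← nsmul_eq_mul]
    exact Finset.card_nsmul_le_sum _ _ _ fun j _ => isoProj_mem x _ j (Nat.zero_le (j : ℕ))
  have hy : ∑ j ∈ Finset.Iic b, y j ≤ ((b : ℕ) + 1) * isoProj y i := by
    refine (sum_Iic_le_sum_Iic_isoProj y hb_gap).trans ?_
    rw [← hcard, ← nsmul_eq_mul, ← hb_eq]
    exact Finset.sum_le_card_nsmul _ _ _ fun j hj => isoProj_mem y j b (Finset.mem_Iic.1 hj)
  have hmean : isoProj x ⟨0, hn⟩ - isoProj y i ≤ wavg (x - y) 0 (b + 1) := by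
    rw [wavg_zero_succ, le_div_iff₀ (by positivity)]
    simp only [PiLp.sub_apply, Finset.sum_sub_distrib]
    linarith
  calc isoProj x ⟨0, hn⟩ - isoProj y i
      ≤ swNorm (fun m => Real.sqrt m) (x - y) / Real.sqrt ((b + 1 : ℕ) : ℝ) :=
        hmean.trans (wavg_le_swNorm_div_sqrt _ (by omega) (by omega))
    _ ≤ swNorm (fun m => Real.sqrt m) (x - y) / Real.sqrt ((i : ℕ) + 1) := by
        have hib' : (i : ℕ) ≤ b := hib
        gcongr
        · exact swNorm_nonneg _ (fun m => Real.sqrt_nonneg m) _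
        · exact_mod_cast Nat.succ_le_succ hib'

lemma one_add_log_le_two_mul_log_two_mul {n : ℕ} (hn : 1 ≤ n) :
    1 + Real.log n ≤ 2 * Real.log (2 * n) := by
  rw [Real.log_mul two_ne_zero (by positivity)]
  have := Real.log_nonneg (show (1 : ℝ) ≤ n by exact_mod_cast hn)
  linarith [Real.log_two_gt_d9]

theorem stmt15 (n : ℕ) (hn : 1 ≤ n) (x y : EuclideanSpace ℝ (Fin n)) :
    (∀ i : Fin n,
      max (isoProj x ⟨0, hn⟩ - isoProj y i) 0
        ≤ swNorm (fun m => Real.sqrt m) (x - y) / Real.sqrt ((i : ℕ) + 1)) ∧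
    ∑ i : Fin n, (max (isoProj x ⟨0, hn⟩ - isoProj y i) 0) ^ 2
      ≤ 2 * (swNorm (fun m => Real.sqrt m) (x - y)) ^ 2 * Real.log (2 * n) := by
  set S := swNorm (fun m => Real.sqrt m) (x - y)
  have hS : 0 ≤ S := swNorm_nonneg _ (fun m => Real.sqrt_nonneg m) _
  have hpos : ∀ i : Fin n,
      max (isoProj x ⟨0, hn⟩ - isoProj y i) 0 ≤ S / Real.sqrt ((i : ℕ) + 1) :=
    fun i => max_le (isoProj_zero_sub_isoProj_le hn x y i) (by positivity)
  refine ⟨hpos, ?_⟩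
  calc ∑ i : Fin n, (max (isoProj x ⟨0, hn⟩ - isoProj y i) 0) ^ 2
      ≤ ∑ i : Fin n, (S / Real.sqrt ((i : ℕ) + 1)) ^ 2 :=
        Finset.sum_le_sum fun i _ => pow_le_pow_left₀ (le_max_right _ _) (hpos i) 2
    _ = S ^ 2 * harmonic n := by
        simp_rw [div_pow, Real.sq_sqrt (Nat.cast_add_one_pos _).le, harmonic, Rat.cast_sum,
          Finset.mul_sum, ← Fin.sum_univ_eq_sum_range]
        push_cast
        rfl
    _ ≤ S ^ 2 * (2 * Real.log (2 * n)) := by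
        gcongr
        exact (harmonic_le_one_add_log n).trans (one_add_log_le_two_mul_log_two_mul hn)
    _ = 2 * S ^ 2 * Real.log (2 * n) := by ring
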